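/- If G is a finite simple graph with no weak support (no vertex of G is adjacent to exactly one leaf), then γ_cer(G) = γ(G). -/

import Mathlib

open Finset

variable {V : Type*} [Fintype V] [DecidableEq V]

/-- `D` is a dominating set of `G`: every vertex outside `D` has a neighbour in `D`. -/
def IsDomSet (G : SimpleGraph V) (D : Finset V) : Prop :=
  ∀ v ∉ D, ∃ u ∈ D, G.Adj u v

/-- `D` is a certified dominating set of `G`: it is dominating and every vertex of `D`
has either zero or at least two neighbours outside `D`. -/
def IsCertDomSet (G : SimpleGraph V) [DecidableRel G.Adj] (D : Finset V) : Prop :=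
  IsDomSet G D ∧ ∀ v ∈ D, (G.neighborFinset v \ D).card = 0 ∨ 2 ≤ (G.neighborFinset v \ D).card

/-- The domination number: minimum cardinality of a dominating set. -/
noncomputable def gamma (G : SimpleGraph V) : ℕ :=
  sInf {n | ∃ D : Finset V, IsDomSet G D ∧ D.card = n}

/-- The certified domination number: minimum cardinality of a certified dominating set. -/
noncomputable def gammaCer (G : SimpleGraph V) [DecidableRel G.Adj] : ℕ :=
  sInf {n | ∃ D : Finset V, IsCertDomSet G D ∧ D.card = n}

/-- A leaf is a vertex of degree one. -/
abbrev IsLeaf (G : SimpleGraph V) [DecidableRel G.Adj] (v : V) : Prop := G.degree v = 1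

/-- The set of leaf-neighbours of a vertex. -/
abbrev leafNbrs (G : SimpleGraph V) [DecidableRel G.Adj] (v : V) : Finset V :=
  (G.neighborFinset v).filter (fun l => G.degree l = 1)

/-- A weak support is a vertex adjacent to exactly one leaf. -/
abbrev IsWeakSupport (G : SimpleGraph V) [DecidableRel G.Adj] (v : V) : Prop :=
  (leafNbrs G v).card = 1

/-- A strong support is a vertex adjacent to at least two leaves. -/
abbrev IsStrongSupport (G : SimpleGraph V) [DecidableRel G.Adj] (v : V) : Prop :=
  2 ≤ (leafNbrs G v).card

/-! Take a minimum dominating set `D` with as few vertices as possible having exactly one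
neighbour outside `D`, and suppose `v ∈ D` has `u` as its only outside neighbour. Neither `v`
nor `u` is a leaf: the other endpoint would be a support vertex, hence carry a second leaf,
and that second leaf contradicts the minimality of `D`. So `v` has a neighbour in `D`, and
then `v` is the only neighbour of `u` in `D`, since otherwise `D - v` still dominates. Now
`D - v + u` is again a minimum dominating set, `u` has at least two outside neighbours in it,
and no other vertex acquires exactly one, contradicting the choice of `D`. -/

open SimpleGraph

def uncertifiedVerts (G : SimpleGraph V) [DecidableRel G.Adj] (D : Finset V) : Finset V :=
  D.filter fun x => (G.neighborFinset x \ D).card = 1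

structure IsMinDomSet (G : SimpleGraph V) (D : Finset V) : Prop where
  isDomSet : IsDomSet G D
  card_eq : D.card = gamma G

structure IsUniqueExtNbr (G : SimpleGraph V) (D : Finset V) (v u : V) : Prop where
  adj : G.Adj v u
  notMem : u ∉ D
  eq_of_adj : ∀ w, G.Adj v w → w ∉ D → w = u

variable {G : SimpleGraph V} {D : Finset V} {l s u v w x y : V}

theorem mem_uncertifiedVerts [DecidableRel G.Adj] :
    x ∈ uncertifiedVerts G D ↔ x ∈ D ∧ ∃! u, G.Adj x u ∧ u ∉ D := by
  simp only [uncertifiedVerts, mem_filter, card_eq_one, eq_singleton_iff_unique_mem, mem_sdiff,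
    mem_neighborFinset, ExistsUnique, and_imp]

theorem IsDomSet.isCertDomSet_of_uncertifiedVerts_eq_empty [DecidableRel G.Adj] (hD : IsDomSet G D)
    (h : uncertifiedVerts G D = ∅) : IsCertDomSet G D := by
  refine ⟨hD, fun x hx => ?_⟩
  have : (G.neighborFinset x \ D).card ≠ 1 := fun h1 =>
    notMem_empty x (h ▸ mem_filter.mpr ⟨hx, h1⟩)
  omega

omit [Fintype V] [DecidableEq V] in
theorem gamma_le_card (hD : IsDomSet G D) : gamma G ≤ D.card :=
  Nat.sInf_le ⟨D, hD, rfl⟩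

theorem gammaCer_le_card [DecidableRel G.Adj] (hD : IsCertDomSet G D) : gammaCer G ≤ D.card :=
  Nat.sInf_le ⟨D, hD, rfl⟩

omit [DecidableEq V] in
theorem exists_isMinDomSet (G : SimpleGraph V) : ∃ D, IsMinDomSet G D := by
  obtain ⟨D, hD, hcard⟩ : ∃ D : Finset V, IsDomSet G D ∧ D.card = gamma G :=
    Nat.sInf_mem (s := {n | ∃ D : Finset V, IsDomSet G D ∧ D.card = n})
      ⟨_, univ, fun v hv => absurd (mem_univ v) hv, rfl⟩
  exact ⟨D, hD, hcard⟩

theorem gamma_le_gammaCer (G : SimpleGraph V) [DecidableRel G.Adj] : gamma G ≤ gammaCer G := by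
  obtain ⟨D, hD, hcard⟩ : ∃ D : Finset V, IsCertDomSet G D ∧ D.card = gammaCer G :=
    Nat.sInf_mem (s := {n | ∃ D : Finset V, IsCertDomSet G D ∧ D.card = n})
      ⟨_, univ, ⟨fun v hv => absurd (mem_univ v) hv, fun v _ => by simp⟩, rfl⟩
  exact hcard ▸ gamma_le_card hD.1

omit [Fintype V] in
theorem IsDomSet.erase (hD : IsDomSet G D) (hx : ∃ y ∈ D, y ≠ x ∧ G.Adj y x)
    (hout : ∀ w ∉ D, G.Adj x w → ∃ y ∈ D, y ≠ x ∧ G.Adj y w) : IsDomSet G (D.erase x) := by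
  intro w hw
  by_cases hwx : w = x
  · obtain ⟨y, hy, hyx, hyw⟩ := hx
    exact ⟨y, mem_erase.mpr ⟨hyx, hy⟩, hwx ▸ hyw⟩
  have hwD : w ∉ D := fun h => hw (mem_erase.mpr ⟨hwx, h⟩)
  obtain ⟨d, hd, hdw⟩ := hD w hwD
  by_cases hdx : d = x
  · obtain ⟨y, hy, hyx, hyw⟩ := hout w hwD (hdx ▸ hdw)
    exact ⟨y, mem_erase.mpr ⟨hyx, hy⟩, hyw⟩
  · exact ⟨d, mem_erase.mpr ⟨hdx, hd⟩, hdw⟩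

omit [Fintype V] in
theorem IsDomSet.insert_erase (hD : IsDomSet G D) (h : IsUniqueExtNbr G D v u) :
    IsDomSet G (insert u (D.erase v)) := by
  intro w hw
  by_cases hwv : w = v
  · exact ⟨u, mem_insert_self u _, hwv ▸ h.adj.symm⟩
  have hwD : w ∉ D := fun hwD => hw (mem_insert_of_mem (mem_erase.mpr ⟨hwv, hwD⟩))
  obtain ⟨d, hd, hdw⟩ := hD w hwD
  have hdv : d ≠ v := by
    rintro rfl
    exact hw (h.eq_of_adj w hdw hwD ▸ mem_insert_self w _)
  exact ⟨d, mem_insert_of_mem (mem_erase.mpr ⟨hdv, hd⟩), hdw⟩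

omit [Fintype V] in
theorem IsMinDomSet.not_isDomSet_erase (hD : IsMinDomSet G D) (hx : x ∈ D) :
    ¬ IsDomSet G (D.erase x) := fun h => by
  have hle := gamma_le_card h
  rw [card_erase_of_mem hx, ← hD.card_eq] at hle
  have := card_pos.mpr ⟨x, hx⟩
  omega

omit [Fintype V] in
theorem IsMinDomSet.insert_erase (hD : IsMinDomSet G D) (hv : v ∈ D)
    (h : IsUniqueExtNbr G D v u) : IsMinDomSet G (insert u (D.erase v)) := by
  refine ⟨hD.isDomSet.insert_erase h, ?_⟩
  rw [card_insert_of_notMem fun hu => h.notMem (mem_of_mem_erase hu), card_erase_of_mem hv,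
    ← hD.card_eq]
  have := card_pos.mpr ⟨v, hv⟩
  omega

omit [Fintype V] in
theorem IsMinDomSet.exists_adj_notMem (hD : IsMinDomSet G D) (hx : x ∈ D) (hxy : G.Adj x y) :
    ∃ w, G.Adj x w ∧ w ∉ D := by
  by_contra! hin
  exact hD.not_isDomSet_erase hx <| hD.isDomSet.erase ⟨y, hin y hxy, hxy.ne.symm, hxy.symm⟩
    fun w hw hxw => absurd (hin w hxw) hw

omit [DecidableEq V] in
theorem IsLeaf.eq_of_adj [DecidableRel G.Adj] (hl : IsLeaf G l) (hu : G.Adj l u)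
    (hw : G.Adj l w) : w = u :=
  (degree_eq_one_iff_existsUnique_adj.mp hl).unique hw hu

omit [DecidableEq V] in
theorem exists_adj_ne_of_not_isLeaf [DecidableRel G.Adj] (hv : ¬ IsLeaf G v) (hu : G.Adj v u) :
    ∃ w, G.Adj v w ∧ w ≠ u := by
  by_contra! h
  exact hv (degree_eq_one_iff_existsUnique_adj.mpr ⟨u, hu, h⟩)

omit [DecidableEq V] in
theorem exists_adj_isLeaf_ne [DecidableRel G.Adj] (h : ¬ IsWeakSupport G s)
    (hl : G.Adj s l) (hleaf : IsLeaf G l) : ∃ l', G.Adj s l' ∧ IsLeaf G l' ∧ l' ≠ l := by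
  have hmem : l ∈ leafNbrs G s := mem_filter.mpr ⟨(mem_neighborFinset ..).mpr hl, hleaf⟩
  have : 1 < (leafNbrs G s).card := by
    have := card_pos.mpr ⟨l, hmem⟩
    omega
  obtain ⟨l', hl', hne⟩ := exists_mem_ne this l
  rw [mem_filter, mem_neighborFinset] at hl'
  exact ⟨l', hl'.1, hl'.2, hne⟩

namespace IsUniqueExtNbr

variable [DecidableRel G.Adj] (hD : IsMinDomSet G D) (hv : v ∈ D) (h : IsUniqueExtNbr G D v u)
include hD hv h

theorem not_isLeaf_left (hweak : ∀ s, ¬ IsWeakSupport G s) : ¬ IsLeaf G v := by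
  intro hleaf
  obtain ⟨l, hul, hl, hlv⟩ := exists_adj_isLeaf_ne (hweak u) h.adj.symm hleaf
  by_cases hlD : l ∈ D
  · -- in `D - v + u` the only neighbour `u` of the leaf `l` is inside
    obtain ⟨w, hlw, hwD⟩ := (hD.insert_erase hv h).exists_adj_notMem
      (mem_insert_of_mem (mem_erase.mpr ⟨hlv, hlD⟩)) hul.symm
    exact hwD (mem_insert.mpr (.inl (hl.eq_of_adj hul.symm hlw)))
  · obtain ⟨d, hd, hdl⟩ := hD.isDomSet l hlD
    exact h.notMem (hl.eq_of_adj hul.symm hdl.symm ▸ hd)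

theorem not_isLeaf_right (hweak : ∀ s, ¬ IsWeakSupport G s) : ¬ IsLeaf G u := by
  intro hleaf
  obtain ⟨l, hvl, hl, hlu⟩ := exists_adj_isLeaf_ne (hweak v) h.adj hleaf
  by_cases hlD : l ∈ D
  · obtain ⟨w, hlw, hwD⟩ := hD.exists_adj_notMem hlD hvl.symm
    exact hwD (hl.eq_of_adj hvl.symm hlw ▸ hv)
  · exact hlu (h.eq_of_adj l hvl hlD)

theorem eq_of_mem_of_adj (hleaf : ¬ IsLeaf G v) (hy : y ∈ D) (hyu : G.Adj y u) : y = v := by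
  by_contra hyv
  obtain ⟨z, hvz, hzu⟩ := exists_adj_ne_of_not_isLeaf hleaf h.adj
  have hzD : z ∈ D := by
    by_contra hzD
    exact hzu (h.eq_of_adj z hvz hzD)
  refine hD.not_isDomSet_erase hv (hD.isDomSet.erase ⟨z, hzD, hvz.ne.symm, hvz.symm⟩ ?_)
  intro w hwD hvw
  exact ⟨y, hy, hyv, h.eq_of_adj w hvw hwD ▸ hyu⟩

theorem uncertifiedVerts_insert_erase_subset (hpriv : ∀ y ∈ D, G.Adj y u → y = v)
    (hu : ¬ IsLeaf G u) :
    uncertifiedVerts G (insert u (D.erase v)) ⊆ (uncertifiedVerts G D).erase v := by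
  intro x hx
  obtain ⟨hxD', hext⟩ := mem_uncertifiedVerts.mp hx
  have hvD' : v ∉ insert u (D.erase v) := by simp [h.adj.ne]
  rcases mem_insert.mp hxD' with hxu | hxE
  · subst x
    obtain ⟨t, hut, htv⟩ := exists_adj_ne_of_not_isLeaf hu h.adj.symm
    have htD' : t ∉ insert u (D.erase v) := by
      simp only [mem_insert, mem_erase, not_or, not_and]
      exact ⟨hut.ne.symm, fun _ htD => htv (hpriv t htD hut.symm)⟩
    exact absurd (hext.unique ⟨hut, htD'⟩ ⟨h.adj.symm, hvD'⟩) htv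
  obtain ⟨hxv, hxD⟩ := mem_erase.mp hxE
  have hxu : ¬ G.Adj x u := fun hxu => hxv (hpriv x hxD hxu)
  refine mem_erase.mpr ⟨hxv, mem_uncertifiedVerts.mpr ⟨hxD, ?_⟩⟩
  by_cases hxv' : G.Adj x v
  · -- `v` and an old outside neighbour of `x` are now two outside neighbours of `x`
    obtain ⟨y, hxy, hyD⟩ := hD.exists_adj_notMem hxD hxv'
    have hyD' : y ∉ insert u (D.erase v) := by
      simp only [mem_insert, mem_erase, not_or, not_and]
      exact ⟨fun hyu => hxu (hyu ▸ hxy), fun _ => hyD⟩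
    exact absurd (hext.unique ⟨hxy, hyD'⟩ ⟨hxv', hvD'⟩ ▸ hv) hyD
  refine (existsUnique_congr fun w => and_congr_right fun hxw => ?_).mp hext
  have hwu : w ≠ u := fun hwu => hxu (hwu ▸ hxw)
  have hwv : w ≠ v := fun hwv => hxv' (hwv ▸ hxw)
  simp [hwu, hwv]

end IsUniqueExtNbr

theorem IsMinDomSet.exists_card_uncertifiedVerts_lt [DecidableRel G.Adj]
    (hweak : ∀ s, ¬ IsWeakSupport G s) (hD : IsMinDomSet G D) (hv : v ∈ uncertifiedVerts G D) :
    ∃ D', IsMinDomSet G D' ∧ (uncertifiedVerts G D').card < (uncertifiedVerts G D).card := by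
  obtain ⟨hvD, u, ⟨hvu, hu⟩, huniq⟩ := mem_uncertifiedVerts.mp hv
  have h : IsUniqueExtNbr G D v u := ⟨hvu, hu, fun w hvw hwD => huniq w ⟨hvw, hwD⟩⟩
  have hpriv : ∀ y ∈ D, G.Adj y u → y = v :=
    fun _ => h.eq_of_mem_of_adj hD hvD (h.not_isLeaf_left hD hvD hweak)
  refine ⟨_, hD.insert_erase hvD h, ?_⟩
  calc (uncertifiedVerts G (insert u (D.erase v))).card
      ≤ ((uncertifiedVerts G D).erase v).card :=
        card_le_card (h.uncertifiedVerts_insert_erase_subset hD hvD hpriv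
          (h.not_isLeaf_right hD hvD hweak))
    _ < (uncertifiedVerts G D).card := card_erase_lt_of_mem hv

theorem exists_isCertDomSet_card_eq_gamma [DecidableRel G.Adj] (hweak : ∀ s, ¬ IsWeakSupport G s) :
    ∃ D, IsCertDomSet G D ∧ D.card = gamma G := by
  obtain ⟨D₀, hD₀⟩ := exists_isMinDomSet G
  obtain ⟨D, hD, hmin⟩ := Set.exists_min_image {D | IsMinDomSet G D}
    (fun D => (uncertifiedVerts G D).card) (Set.toFinite _) ⟨D₀, hD₀⟩
  refine ⟨D, hD.isDomSet.isCertDomSet_of_uncertifiedVerts_eq_empty (eq_empty_iff_forall_notMem.mpr fun v hv => ?_), hD.card_eq⟩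
  obtain ⟨D', hD', hlt⟩ := hD.exists_card_uncertifiedVerts_lt hweak hv
  exact (hmin D' hD').not_gt hlt

theorem gammaCer_eq_gamma_of_no_weakSupport (G : SimpleGraph V) [DecidableRel G.Adj]
    (h : ∀ v : V, ¬ IsWeakSupport G v) :
    gammaCer G = gamma G := by
  obtain ⟨D, hD, hcard⟩ := exists_isCertDomSet_card_eq_gamma h
  exact le_antisymm (hcard ▸ gammaCer_le_card hD) (gamma_le_gammaCer G)
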